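/- Let D : ℝⁿ × ℝⁿ → ℝ be a C^∞ function with D(x,y) ≥ 0 for all x, y and D(x,y) = 0 if and only if x = y. Define g_{ij}(p) := ∂_i∂_j D(p,p), Γ_{kij}(p) := −∂_k∂_i∂'_j D(p,p) and Γ*_{kij}(p) := −∂'_k∂'_i∂_j D(p,p), all derivatives evaluated on the diagonal. Then for every p ∈ ℝⁿ and all indices i, j, k, the derivative of the function p ↦ g_{ij}(p) in the k-th coordinate direction satisfies ∂_k g_{ij}(p) = Γ_{kij}(p) + Γ*_{kji}(p) (the duality of the two induced connections with respect to the induced metric). -/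

import Mathlib

/-- Partial derivative of `D : ℝⁿ × ℝⁿ → ℝ` in the `i`-th coordinate of the
first argument, evaluated at `(x, y)`. -/
noncomputable def pd1 {n : ℕ} (D : (Fin n → ℝ) → (Fin n → ℝ) → ℝ) (i : Fin n)
    (x y : Fin n → ℝ) : ℝ :=
  fderiv ℝ (fun x' => D x' y) x (Pi.single i 1)

/-- Partial derivative of `D : ℝⁿ × ℝⁿ → ℝ` in the `i`-th coordinate of the
second argument, evaluated at `(x, y)`. -/
noncomputable def pd2 {n : ℕ} (D : (Fin n → ℝ) → (Fin n → ℝ) → ℝ) (i : Fin n)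
    (x y : Fin n → ℝ) : ℝ :=
  fderiv ℝ (fun y' => D x y') y (Pi.single i 1)

/-- The induced metric coefficients `g_{ij}(p) := ∂_i ∂_j D (p,p)`. -/
noncomputable def inducedMetric {n : ℕ} (D : (Fin n → ℝ) → (Fin n → ℝ) → ℝ)
    (i j : Fin n) (p : Fin n → ℝ) : ℝ :=
  pd1 (pd1 D j) i p p

/-- The induced connection coefficients `Γ_{kij}(p) := − ∂_k ∂_i ∂'_j D (p,p)`. -/
noncomputable def inducedGamma {n : ℕ} (D : (Fin n → ℝ) → (Fin n → ℝ) → ℝ)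
    (k i j : Fin n) (p : Fin n → ℝ) : ℝ :=
  -(pd1 (pd1 (pd2 D j) i) k p p)

/-- The dual induced connection coefficients
`Γ*_{kij}(p) := − ∂'_k ∂'_i ∂_j D (p,p)`. -/
noncomputable def inducedGammaStar {n : ℕ} (D : (Fin n → ℝ) → (Fin n → ℝ) → ℝ)
    (k i j : Fin n) (p : Fin n → ℝ) : ℝ :=
  -(pd2 (pd2 (pd1 D j) i) k p p)

namespace DivergenceDuality

open ContinuousLinearMap

abbrev E (n : ℕ) := Fin n → ℝ

/-- Evaluation of a CLM-valued map at a fixed vector, derivative. -/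
lemma hasFDerivAt_eval {X G H : Type*} [NormedAddCommGroup X] [NormedSpace ℝ X]
    [NormedAddCommGroup G] [NormedSpace ℝ G] [NormedAddCommGroup H] [NormedSpace ℝ H]
    {Φ : X → G →L[ℝ] H} {Φ' : X →L[ℝ] G →L[ℝ] H} {z : X}
    (h : HasFDerivAt Φ Φ' z) (v : G) :
    HasFDerivAt (fun z' => Φ z' v) (Φ'.flip v) z := by
  simpa using h.clm_apply (hasFDerivAt_const v z)

variable {n : ℕ}

lemma pd1_eq (f : E n → E n → ℝ) (hf : Differentiable ℝ (fun q : E n × E n => f q.1 q.2))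
    (i : Fin n) (x y : E n) :
    pd1 f i x y = fderiv ℝ (fun q : E n × E n => f q.1 q.2) (x, y) (Pi.single i 1, 0) := by
  have h1 : HasFDerivAt (fun x' : E n => (x', y)) (inl ℝ (E n) (E n)) x :=
    hasFDerivAt_prodMk_left x y
  have h2' : HasFDerivAt (fun x' => f x' y)
      ((fderiv ℝ (fun q : E n × E n => f q.1 q.2) (x, y)).comp (inl ℝ (E n) (E n))) x :=
    (hf (x, y)).hasFDerivAt.comp (f := fun x' : E n => (x', y)) x h1
  simp only [pd1]
  rw [h2'.fderiv]
  simp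

lemma pd2_eq (f : E n → E n → ℝ) (hf : Differentiable ℝ (fun q : E n × E n => f q.1 q.2))
    (i : Fin n) (x y : E n) :
    pd2 f i x y = fderiv ℝ (fun q : E n × E n => f q.1 q.2) (x, y) (0, Pi.single i 1) := by
  have h1 : HasFDerivAt (fun y' : E n => (x, y')) (inr ℝ (E n) (E n)) y :=
    hasFDerivAt_prodMk_right x y
  have h2' : HasFDerivAt (fun y' => f x y')
      ((fderiv ℝ (fun q : E n × E n => f q.1 q.2) (x, y)).comp (inr ℝ (E n) (E n))) y :=
    (hf (x, y)).hasFDerivAt.comp y h1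
  simp only [pd2]
  rw [h2'.fderiv]
  simp

section Main

variable (D : E n → E n → ℝ)

/-- The uncurried divergence. -/
noncomputable def F : E n × E n → ℝ := fun q => D q.1 q.2

noncomputable def F1 : E n × E n → (E n × E n) →L[ℝ] ℝ := fderiv ℝ (F D)

noncomputable def F2 : E n × E n → (E n × E n) →L[ℝ] (E n × E n) →L[ℝ] ℝ :=
  fderiv ℝ (F1 D)

noncomputable def F3 : E n × E n →
    (E n × E n) →L[ℝ] (E n × E n) →L[ℝ] (E n × E n) →L[ℝ] ℝ :=
  fderiv ℝ (F2 D)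

variable {D}
variable (hs : ContDiff ℝ (⊤ : ℕ∞) (F D))

include hs

lemma hFd : Differentiable ℝ (F D) := hs.differentiable (by simp)

lemma hF1c : ContDiff ℝ (⊤ : ℕ∞) (F1 D) := hs.fderiv_right (by simp)

lemma hF1d : Differentiable ℝ (F1 D) := (hF1c hs).differentiable (by simp)

lemma hF2c : ContDiff ℝ (⊤ : ℕ∞) (F2 D) := (hF1c hs).fderiv_right (by simp)

lemma hF2d : Differentiable ℝ (F2 D) := (hF2c hs).differentiable (by simp)

/-- derivative of `z ↦ F1 z v`. -/
lemma heval1 (v : E n × E n) (z w : E n × E n) :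
    fderiv ℝ (fun z' => F1 D z' v) z w = F2 D z w v := by
  rw [(hasFDerivAt_eval (hF1d hs z).hasFDerivAt v).fderiv]
  rfl

/-- derivative of `z ↦ F2 z v w`. -/
lemma heval2 (v w : E n × E n) (z u : E n × E n) :
    fderiv ℝ (fun z' => F2 D z' v w) z u = F3 D z u v w := by
  have h1 : HasFDerivAt (fun z' => F2 D z' v) ((F3 D z).flip v) z :=
    hasFDerivAt_eval (hF2d hs z).hasFDerivAt v
  rw [(hasFDerivAt_eval h1 w).fderiv]
  rfl

/-- symmetry of `F2` (Schwarz). -/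
lemma symF2 (z : E n × E n) (x y : E n × E n) : F2 D z x y = F2 D z y x :=
  second_derivative_symmetric (fun q => (hFd hs q).hasFDerivAt)
    (hF1d hs z).hasFDerivAt x y

/-- symmetry of `F3` in the last two slots. -/
lemma symF3_23 (z : E n × E n) (u x y : E n × E n) :
    F3 D z u x y = F3 D z u y x := by
  have h1 : (fun z' => F2 D z' x y) = fun z' => F2 D z' y x :=
    funext fun z' => symF2 hs z' x y
  have := heval2 hs x y z u
  rw [h1, heval2 hs y x z u] at this
  exact this.symm

end Main

end DivergenceDuality

open DivergenceDuality ContinuousLinearMap in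
/-- For a smooth divergence `D` on ℝⁿ, the induced connections `Γ` and `Γ*`
are dual with respect to the induced metric `g`:
`∂_k g_{ij}(p) = Γ_{kij}(p) + Γ*_{kji}(p)`. -/
theorem divergence_duality {n : ℕ}
    (D : (Fin n → ℝ) → (Fin n → ℝ) → ℝ)
    (hsmooth : ContDiff ℝ (⊤ : ℕ∞) (fun x : (Fin n → ℝ) × (Fin n → ℝ) => D x.1 x.2))
    (hnonneg : ∀ x y, 0 ≤ D x y)
    (hzero : ∀ x y, D x y = 0 ↔ x = y) :
    ∀ (p : Fin n → ℝ) (i j k : Fin n),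
      fderiv ℝ (inducedMetric D i j) p (Pi.single k 1) =
        inducedGamma D k i j p + inducedGammaStar D k j i p := by
  have hs : ContDiff ℝ (⊤ : ℕ∞) (F D) := hsmooth
  intro p i j k
  set a : E n × E n := (Pi.single i 1, 0) with ha
  set b : E n × E n := (Pi.single j 1, 0) with hb
  set b' : E n × E n := (0, Pi.single j 1) with hb'
  set k1 : E n × E n := (Pi.single k 1, 0) with hk1
  set k2 : E n × E n := (0, Pi.single k 1) with hk2
  set d : E n × E n := (Pi.single k 1, Pi.single k 1) with hd
  -- unfoldings of pd1/pd2 of D itself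
  have hunc1 : ∀ (m : Fin n), (fun z : E n × E n => pd1 D m z.1 z.2)
      = fun z => F1 D z (Pi.single m 1, 0) :=
    fun m => funext fun z => pd1_eq D (hFd hs) m z.1 z.2
  have hunc2 : ∀ (m : Fin n), (fun z : E n × E n => pd2 D m z.1 z.2)
      = fun z => F1 D z (0, Pi.single m 1) :=
    fun m => funext fun z => pd2_eq D (hFd hs) m z.1 z.2
  -- differentiability of evaluated maps
  have hdiff1 : ∀ (v : E n × E n), Differentiable ℝ (fun z => F1 D z v) :=
    fun v => (hF1d hs).clm_apply (differentiable_const v)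
  have hdiff2 : ∀ (v w : E n × E n), Differentiable ℝ (fun z => F2 D z v w) :=
    fun v w => ((hF2d hs).clm_apply (differentiable_const v)).clm_apply
      (differentiable_const w)
  -- second-level unfoldings
  have hunc11 : (fun z : E n × E n => pd1 (pd1 D j) i z.1 z.2)
      = fun z => F2 D z a b := by
    funext z
    rw [pd1_eq (pd1 D j) (by rw [hunc1 j]; exact hdiff1 b) i z.1 z.2,
      hunc1 j, heval1 hs b]
  have hunc12 : (fun z : E n × E n => pd1 (pd2 D j) i z.1 z.2)
      = fun z => F2 D z a b' := by
    funext z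
    rw [pd1_eq (pd2 D j) (by rw [hunc2 j]; exact hdiff1 b') i z.1 z.2,
      hunc2 j, heval1 hs b']
  have hunc21 : (fun z : E n × E n => pd2 (pd1 D i) j z.1 z.2)
      = fun z => F2 D z b' a := by
    funext z
    rw [pd2_eq (pd1 D i) (by rw [hunc1 i]; exact hdiff1 a) j z.1 z.2,
      hunc1 i, heval1 hs a]
  -- Gamma in terms of F3
  have hGamma : inducedGamma D k i j p = -(F3 D (p, p) k1 a b') := by
    rw [inducedGamma, pd1_eq (pd1 (pd2 D j) i) (by rw [hunc12]; exact hdiff2 a b') k p p,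
      hunc12, heval2 hs a b']
  have hGammaStar : inducedGammaStar D k j i p = -(F3 D (p, p) k2 b' a) := by
    rw [inducedGammaStar, pd2_eq (pd2 (pd1 D i) j) (by rw [hunc21]; exact hdiff2 b' a) k p p,
      hunc21, heval2 hs b' a]
  -- the diagonal map
  have hdiag : ∀ q : E n, HasFDerivAt (fun q' : E n => (q', q'))
      ((ContinuousLinearMap.id ℝ (E n)).prod (ContinuousLinearMap.id ℝ (E n))) q :=
    fun q => HasFDerivAt.prodMk (hasFDerivAt_id q) (hasFDerivAt_id q)
  -- LHS
  have hLHS : fderiv ℝ (inducedMetric D i j) p (Pi.single k 1) = F3 D (p, p) d a b := by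
    have hmetric : inducedMetric D i j = fun q => F2 D (q, q) a b := by
      funext q
      have := congrFun hunc11 (q, q)
      simpa [inducedMetric] using this
    have hev : HasFDerivAt (fun z => F2 D z a b)
        (((F3 D (p, p)).flip a).flip b) (p, p) :=
      hasFDerivAt_eval (hasFDerivAt_eval (hF2d hs (p, p)).hasFDerivAt a) b
    have hcomp : HasFDerivAt (fun q : E n => F2 D (q, q) a b)
        ((((F3 D (p, p)).flip a).flip b).comp
          ((ContinuousLinearMap.id ℝ (E n)).prod (ContinuousLinearMap.id ℝ (E n)))) p :=
      hev.comp (f := fun q' : E n => (q', q')) p (hdiag p)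
    rw [hmetric, hcomp.fderiv]
    simp [hd]
  -- vanishing of first partial derivatives on the diagonal
  have h0 : ∀ (y : E n) (v : E n), F1 D (y, y) (v, 0) = 0 := by
    intro y v
    have hmin : IsLocalMin (fun x => D x y) y :=
      Filter.Eventually.of_forall fun x => by
        simp only
        rw [(hzero y y).mpr rfl]
        exact hnonneg x y
    have hz := hmin.fderiv_eq_zero
    have h2' : HasFDerivAt (fun x' => D x' y)
        ((F1 D (y, y)).comp (inl ℝ (E n) (E n))) y :=
      (hFd hs (y, y)).hasFDerivAt.comp (f := fun x' : E n => (x', y)) y (hasFDerivAt_prodMk_left y y)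
    have := h2'.fderiv
    rw [hz] at this
    have := congrFun (congrArg DFunLike.coe this.symm) v
    simpa using this
  -- first differentiation of the vanishing identity
  have h1 : ∀ (y : E n) (v w : E n), F2 D (y, y) (w, w) (v, 0) = 0 := by
    intro y v w
    have hφ : HasFDerivAt (fun q : E n => F1 D (q, q) (v, 0))
        (((F2 D (y, y)).flip (v, 0)).comp
          ((ContinuousLinearMap.id ℝ (E n)).prod (ContinuousLinearMap.id ℝ (E n)))) y :=
      (hasFDerivAt_eval (hF1d hs (y, y)).hasFDerivAt (v, 0)).comp (f := fun q' : E n => (q', q')) y (hdiag y)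
    have hφ0 : (fun q : E n => F1 D (q, q) (v, 0)) = fun _ => (0 : ℝ) :=
      funext fun q => h0 q v
    rw [hφ0] at hφ
    have := hφ.unique (hasFDerivAt_const 0 y)
    have := congrFun (congrArg DFunLike.coe this) w
    simpa using this
  -- second differentiation of the vanishing identity
  have h2 : ∀ (y : E n) (v w u : E n), F3 D (y, y) (u, u) (w, w) (v, 0) = 0 := by
    intro y v w u
    have hev : HasFDerivAt (fun z => F2 D z (w, w) (v, 0))
        (((F3 D (y, y)).flip (w, w)).flip (v, 0)) (y, y) :=
      hasFDerivAt_eval (hasFDerivAt_eval (hF2d hs (y, y)).hasFDerivAt (w, w)) (v, 0)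
    have hψ := hev.comp (f := fun q' : E n => (q', q')) y (hdiag y)
    have hψ0 : ((fun z => F2 D z (w, w) (v, 0)) ∘ fun q : E n => (q, q)) =
        fun _ => (0 : ℝ) := funext fun q => h1 q v w
    rw [hψ0] at hψ
    have := hψ.unique (hasFDerivAt_const 0 y)
    have := congrFun (congrArg DFunLike.coe this) u
    simpa using this
  -- final algebra
  rw [hLHS, hGamma, hGammaStar]
  have e1 : F3 D (p, p) d a b = F3 D (p, p) d b a := symF3_23 hs (p, p) d a b
  have ebb : (Pi.single j 1, Pi.single j 1) = b + b' := by
    rw [hb, hb', Prod.mk_add_mk, add_zero, zero_add]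
  have e2 : F3 D (p, p) d b a + F3 D (p, p) d b' a = 0 := by
    have := h2 p (Pi.single i 1) (Pi.single j 1) (Pi.single k 1)
    rw [show ((Pi.single k 1 : E n), (Pi.single k 1 : E n)) = d from hd.symm, ebb,
      map_add, ContinuousLinearMap.add_apply] at this
    exact this
  have edd : d = k1 + k2 := by
    rw [hd, hk1, hk2, Prod.mk_add_mk, add_zero, zero_add]
  have e3 : F3 D (p, p) d b' a = F3 D (p, p) k1 b' a + F3 D (p, p) k2 b' a := by
    rw [edd, map_add, ContinuousLinearMap.add_apply, ContinuousLinearMap.add_apply]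
  have e4 : F3 D (p, p) k1 b' a = F3 D (p, p) k1 a b' := symF3_23 hs (p, p) k1 b' a
  linarith
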